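/- Let L = (𝔬_{E,f}, 𝒩), and let Jor(L) denote the set of integers i such that some (equivalently, any) Jordan splitting of L has a nonzero ϖ^i-modular component. (1) If E/F is unramified: for f < e, Jor(L) = {f − e} and L is an indecomposable ϖ^{f−e}-modular lattice; for f ≥ e, Jor(L) = {0, 2f − 2e} and L is equivalent to (1) ⊥ (uϖ^{2f−2e}) for some u ∈ 𝔬^×. (2) If E/F is ramified with d = 2g ≤ 2e: for f < e − g, Jor(L) = {f + g − e} and L is an indecomposable ϖ^{f+g−e}-modular lattice; for f ≥ e − g, Jor(L) = {0, 2f + 2g − 2e} and L is equivalent to (1) ⊥ (uϖ^{2f+2g−2e}) for some u ∈ 𝔬^×. (3) If E/F is ramified with d = 2e + 1, then Jor(L) = {0, 2f+1} and L is equivalent to (1) ⊥ (uϖ^{2f+1}) for some u ∈ 𝔬^×. -/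

import Mathlib

open scoped Classical

noncomputable section

namespace GK

variable {F : Type} [Field F]

/-- The axioms making `(F, O, ord)` a nonarchimedean local field of characteristic zero
(i.e. a finite extension of `ℚ_p`): `ord` is a surjective discrete valuation, `O` is its
valuation ring, the residue field is finite of cardinality `q` and of characteristic `p`,
and `O` is complete. -/
structure LocalFieldAxioms (O : Subring F) (ord : F → ℤ) (p q : ℕ) : Prop where
  ord_mul : ∀ x y : F, x ≠ 0 → y ≠ 0 → ord (x * y) = ord x + ord y
  min_le_ord_add : ∀ x y : F, x ≠ 0 → y ≠ 0 → x + y ≠ 0 → min (ord x) (ord y) ≤ ord (x + y)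
  ord_surjective : ∀ k : ℤ, ∃ x : F, x ≠ 0 ∧ ord x = k
  mem_integers : ∀ x : F, x ∈ O ↔ x = 0 ∨ 0 ≤ ord x
  charZero : CharZero F
  p_prime : Nat.Prime p
  ord_p_pos : 0 < ord (p : F)
  residue_card : ∃ S : Finset F, S.card = q ∧ (∀ x ∈ S, x ∈ O) ∧
    (∀ x : F, x ∈ O → ∃ y ∈ S, x - y = 0 ∨ 1 ≤ ord (x - y)) ∧
    ∀ y ∈ S, ∀ z ∈ S, (y - z = 0 ∨ 1 ≤ ord (y - z)) → y = z
  complete : ∀ x : ℕ → F, (∀ k, x k ∈ O) →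
    (∀ k : ℕ, x (k+1) - x k = 0 ∨ (k : ℤ) ≤ ord (x (k+1) - x k)) →
    ∃ L : F, L ∈ O ∧ ∀ k : ℕ, x k - L = 0 ∨ (k : ℤ) ≤ ord (x k - L)

/-- `x` lies in `c • O`. -/
def MemScale (O : Subring F) (c x : F) : Prop := ∃ w, w ∈ O ∧ x = c * w

/-- A half-integral symmetric matrix: symmetric, integral diagonal, and
twice every entry is integral. -/
def HalfIntegral (O : Subring F) {n : ℕ} (B : Matrix (Fin n) (Fin n) F) : Prop :=
  B.IsSymm ∧ (∀ i, B i i ∈ O) ∧ ∀ i j, 2 * B i j ∈ O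

/-- `U ∈ GLₙ(O)`: entries in `O` and determinant a unit of `O`. -/
def IsGLO (O : Subring F) (ord : F → ℤ) {n : ℕ} (U : Matrix (Fin n) (Fin n) F) : Prop :=
  (∀ i j, U i j ∈ O) ∧ U.det ≠ 0 ∧ ord U.det = 0

/-- `GLₙ(O)`-equivalence of matrices: `B' = ᵗU · B · U`. -/
def EquivO (O : Subring F) (ord : F → ℤ) {n : ℕ} (B B' : Matrix (Fin n) (Fin n) F) : Prop :=
  ∃ U : Matrix (Fin n) (Fin n) F, IsGLO O ord U ∧ B' = U.transpose * B * U

/-- `a ∈ S(B)` : a non-decreasing sequence of naturals with `ord (B i i) ≥ a i` and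
`ord (2 B i j) ≥ (a i + a j)/2`. -/
def InS (ord : F → ℤ) {n : ℕ} (B : Matrix (Fin n) (Fin n) F) (a : Fin n → ℕ) : Prop :=
  Monotone a ∧ (∀ i, B i i = 0 ∨ (a i : ℤ) ≤ ord (B i i)) ∧
    ∀ i j, 2 * B i j = 0 ∨ (a i : ℤ) + (a j : ℤ) ≤ 2 * ord (2 * B i j)

/-- The union of the `S(ᵗU·B·U)` over all `U ∈ GLₙ(O)`. -/
def GKSet (O : Subring F) (ord : F → ℤ) {n : ℕ} (B : Matrix (Fin n) (Fin n) F) :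
    Set (Fin n → ℕ) :=
  {a | ∃ B', EquivO O ord B B' ∧ InS ord B' a}

/-- Lexicographic comparison of sequences. -/
def LexLE {n : ℕ} (a b : Fin n → ℕ) : Prop :=
  a = b ∨ ∃ k, (∀ j, j < k → a j = b j) ∧ a k < b k

/-- `a` is the Gross–Keating invariant of `B` : the lexicographically greatest
element of `⋃_U S(ᵗU·B·U)`. -/
def IsGK (O : Subring F) (ord : F → ℤ) {n : ℕ} (B : Matrix (Fin n) (Fin n) F)
    (a : Fin n → ℕ) : Prop :=
  a ∈ GKSet O ord B ∧ ∀ b ∈ GKSet O ord B, LexLE b a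

/-- Orthogonal (block diagonal) sum of two square matrices. -/
def orthSum {m k : ℕ} (A : Matrix (Fin m) (Fin m) F) (B : Matrix (Fin k) (Fin k) F) :
    Matrix (Fin (m + k)) (Fin (m + k)) F :=
  Matrix.reindex finSumFinEquiv finSumFinEquiv (Matrix.fromBlocks A 0 0 B)

/-- The congruence condition `ᵗX·B·X − B ∈ 𝔭^N · ℋₙ(𝔬)` for a matrix `X` with
entries in `O`. -/
def DensCond (O : Subring F) (ord : F → ℤ) {n : ℕ}
    (B X : Matrix (Fin n) (Fin n) F) (N : ℕ) : Prop :=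
  (∀ i j, X i j ∈ O) ∧
  (∀ i, (X.transpose * B * X - B) i i = 0 ∨
      (N : ℤ) ≤ ord ((X.transpose * B * X - B) i i)) ∧
  ∀ i j, 2 * (X.transpose * B * X - B) i j = 0 ∨
      (N : ℤ) ≤ ord (2 * (X.transpose * B * X - B) i j)

/-- The number of solutions `X ∈ Mₙ(𝔬/𝔭^N)` of `ᵗX·B·X ≡ B mod 𝔭^N ℋₙ(𝔬)`,
counted as residue classes mod `𝔭^N` of integral matrix solutions. -/
def densCount (O : Subring F) (ord : F → ℤ) {n : ℕ}
    (B : Matrix (Fin n) (Fin n) F) (N : ℕ) : ℕ :=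
  Nat.card (Quot (fun X Y : {X : Matrix (Fin n) (Fin n) F // DensCond O ord B X N} =>
    ∀ i j, X.1 i j - Y.1 i j = 0 ∨ (N : ℤ) ≤ ord (X.1 i j - Y.1 i j)))

/-- `β` is the local density `β(L)` of the quadratic lattice with Gram matrix `B`:
`β = (1/2)·(q^N)^{-n(n-1)/2} · #{X ∈ Mₙ(𝔬/𝔭^N) : ᵗX·B·X ≡ B}` for all large `N`. -/
def IsLocalDensity (O : Subring F) (ord : F → ℤ) (q : ℕ) {n : ℕ}
    (B : Matrix (Fin n) (Fin n) F) (β : ℝ) : Prop :=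
  ∃ N₀ : ℕ, ∀ N ≥ N₀,
    β = (1/2) * (densCount O ord B N : ℝ) / ((q : ℝ) ^ (N * (n * (n-1) / 2)))

/-- A unimodular (Gram) matrix: integral entries and unit determinant. -/
def IsUnimodularMat (O : Subring F) (ord : F → ℤ) {ι : Type} [Fintype ι] [DecidableEq ι]
    (C : Matrix ι ι F) : Prop :=
  (∀ i j, C i j ∈ O) ∧ C.det ≠ 0 ∧ ord C.det = 0

/-- `C` is `π^i`-modular. -/
def IsModularMat (O : Subring F) (ord : F → ℤ) (π : F) {ι : Type} [Fintype ι] [DecidableEq ι]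
    (C : Matrix ι ι F) (i : ℤ) : Prop :=
  IsUnimodularMat O ord (π ^ (-i) • C)

/-- `B` is (the Gram matrix of) a Jordan splitting, the block of level `i`
consisting of the indices `s` with `m s = i`, and being `π^i`-modular. -/
def IsJordanMatrix (O : Subring F) (ord : F → ℤ) (π : F) {n : ℕ}
    (B : Matrix (Fin n) (Fin n) F) (m : Fin n → ℤ) : Prop :=
  (∀ s t, m s ≠ m t → B s t = 0) ∧
  ∀ i : ℤ, (∃ s, m s = i) →
    IsModularMat O ord π
      (B.submatrix (fun s : {s : Fin n // m s = i} => (s : Fin n))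
        (fun s : {s : Fin n // m s = i} => (s : Fin n))) i

/-- The `π^i`-modular Jordan component of the lattice with Gram matrix `B` is nonzero. -/
def HasJordanComponent (O : Subring F) (ord : F → ℤ) (π : F) {n : ℕ}
    (B : Matrix (Fin n) (Fin n) F) (i : ℤ) : Prop :=
  ∃ (B' : Matrix (Fin n) (Fin n) F) (m : Fin n → ℤ),
    EquivO O ord B B' ∧ IsJordanMatrix O ord π B' m ∧ ∃ s, m s = i

/-- number of indices in the level `i` Jordan block. -/
def jordanRank {n : ℕ} (m : Fin n → ℤ) (i : ℤ) : ℕ :=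
  (Finset.univ.filter fun s => m s = i).card

/-- The level `i` Jordan constituent of the Jordan matrix `B` has parity type I,
i.e. its norm ideal is all of `O` (some normalized diagonal entry is a unit). -/
def JordanTypeI (ord : F → ℤ) (π : F) {n : ℕ}
    (B : Matrix (Fin n) (Fin n) F) (m : Fin n → ℤ) (i : ℤ) : Prop :=
  ∃ s, m s = i ∧ π ^ (-i) * B s s ≠ 0 ∧ ord (π ^ (-i) * B s s) = 0

/-- The sublattice `L ∩ π^i L♯ = {x ∈ 𝔬ⁿ : ⟨x, L⟩ ⊆ π^i 𝔬}` of the lattice with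
Gram matrix `B`. -/
def DualCapLattice (O : Subring F) (π : F) {n : ℕ}
    (B : Matrix (Fin n) (Fin n) F) (i : ℤ) : Set (Fin n → F) :=
  {x | (∀ s, x s ∈ O) ∧ ∀ s, MemScale O (π ^ i) (B.mulVec x s)}

/-- `C` is a Gram matrix of the quadratic lattice `(L ∩ π^i L♯, π^{-i} Q)`. -/
def IsGramOfDualCap (O : Subring F) (π : F) {n : ℕ}
    (B : Matrix (Fin n) (Fin n) F) (i : ℤ) (C : Matrix (Fin n) (Fin n) F) : Prop :=
  ∃ W : Matrix (Fin n) (Fin n) F, W.det ≠ 0 ∧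
    (∀ t, (fun s => W s t) ∈ DualCapLattice O π B i) ∧
    (∀ x ∈ DualCapLattice O π B i, ∃ c : Fin n → F, (∀ t, c t ∈ O) ∧ x = W.mulVec c) ∧
    C = π ^ (-i) • (W.transpose * B * W)

/-- `σ` is an `a`-admissible involution (Ikeda–Katsurada). -/
def IsAdmissible {n : ℕ} (a : Fin n → ℕ) (σ : Fin n → Fin n) : Prop :=
  Monotone a ∧
  (∀ i, σ (σ i) = i) ∧
  -- `#P⁰ ≤ 2`
  (∀ i j k, σ i = i → σ j = j → σ k = k → i = j ∨ i = k ∨ j = k) ∧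
  -- distinct fixed points have values of different parities
  (∀ i j, σ i = i → σ j = j → i ≠ j → a i % 2 ≠ a j % 2) ∧
  -- maximality condition at fixed points
  (∀ i, σ i = i → ∀ j, (σ j = j ∨ a (σ j) < a j) → a j % 2 = a i % 2 → a j ≤ a i) ∧
  -- at most one element of `P⁺` in each block
  (∀ i j, a i = a j → a (σ i) < a i → a (σ j) < a j → i = j) ∧
  -- at most one element of `P⁻ ∪ P⁰` in each block
  (∀ i j, a i = a j → (a i < a (σ i) ∨ σ i = i) → (a j < a (σ j) ∨ σ j = j) → i = j) ∧
  -- the matching conditions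
  (∀ i, a i < a (σ i) → a (σ i) % 2 = a i % 2 ∧
    ∀ j, a (σ j) < a j → a i < a j → a j % 2 = a i % 2 → a (σ i) ≤ a j) ∧
  ∀ i, a (σ i) < a i →
    ∀ j, a j < a (σ j) → a j < a i → a j % 2 = a i % 2 → a j ≤ a (σ i)

/-- `B` is a reduced form of GK type `(a, σ)` (Ikeda–Katsurada). -/
def IsReducedForm (O : Subring F) (ord : F → ℤ) {n : ℕ}
    (B : Matrix (Fin n) (Fin n) F) (a : Fin n → ℕ) (σ : Fin n → Fin n) : Prop :=
  HalfIntegral O B ∧ B.det ≠ 0 ∧ InS ord B a ∧ IsAdmissible a σ ∧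
  (∀ i, σ i ≠ i → 2 * B i (σ i) ≠ 0 ∧ 2 * ord (2 * B i (σ i)) = (a i : ℤ) + (a (σ i) : ℤ)) ∧
  (∀ i, (σ i = i ∨ a i < a (σ i)) → B i i ≠ 0 ∧ ord (B i i) = (a i : ℤ)) ∧
  ∀ i j, j ≠ i → j ≠ σ i → 2 * B i j = 0 ∨ (a i : ℤ) + (a j : ℤ) < 2 * ord (2 * B i j)

/-- `D` is a nonzero square of `F`. -/
def IsSquareNZ (D : F) : Prop := ∃ c : F, c ≠ 0 ∧ D = c * c

/-- `F(√D)/F` is unramified (possibly trivial): `D` times a square is of the form `1 + 4t`,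
`t ∈ O`. -/
def UnramSqrt (O : Subring F) (D : F) : Prop :=
  ∃ c t : F, c ≠ 0 ∧ t ∈ O ∧ D * (c * c) = 1 + 4 * t

/-- `ζ = ξ_B` for a (nondegenerate) even-size half-integral `B`. -/
def XiIs (O : Subring F) {n : ℕ} (B : Matrix (Fin n) (Fin n) F) (ζ : ℤ) : Prop :=
  (IsSquareNZ ((-4 : F) ^ (n / 2) * B.det) ∧ ζ = 1) ∨
  (¬ IsSquareNZ ((-4 : F) ^ (n / 2) * B.det) ∧
    UnramSqrt O ((-4 : F) ^ (n / 2) * B.det) ∧ ζ = -1) ∨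
  (¬ IsSquareNZ ((-4 : F) ^ (n / 2) * B.det) ∧
    ¬ UnramSqrt O ((-4 : F) ^ (n / 2) * B.det) ∧ ζ = 0)

/-- the columns of `W` span a totally isotropic subspace for `B`. -/
def IsIsotropicSub {n k : ℕ} (B : Matrix (Fin n) (Fin n) F)
    (W : Matrix (Fin n) (Fin k) F) : Prop :=
  (∀ c : Fin k → F, W.mulVec c = 0 → c = 0) ∧ ∀ s t, (W.transpose * B * W) s t = 0

/-- `(Fⁿ, B)` is split: it has a totally isotropic subspace of dimension `⌊n/2⌋`. -/
def SplitSpace {n : ℕ} (B : Matrix (Fin n) (Fin n) F) : Prop :=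
  ∃ W : Matrix (Fin n) (Fin (n / 2)) F, IsIsotropicSub B W

/-- `ζ = η_B` for an odd-size nondegenerate `B`. -/
def EtaIs {n : ℕ} (B : Matrix (Fin n) (Fin n) F) (ζ : ℤ) : Prop :=
  (SplitSpace B ∧ ζ = 1) ∨ (¬ SplitSpace B ∧ ζ = -1)

/-- An extended Gross–Keating datum `(n₁,…,n_r; m₁,…,m_r; ζ₁,…,ζ_r)`. -/
def EGKDatum : Type := Σ r : ℕ, (Fin r → ℕ) × (Fin r → ℕ) × (Fin r → ℤ)

/-- leading principal `k × k` submatrix. -/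
def leadBlock {n : ℕ} (B : Matrix (Fin n) (Fin n) F) (k : ℕ) (h : k ≤ n) :
    Matrix (Fin k) (Fin k) F :=
  B.submatrix (Fin.castLE h) (Fin.castLE h)

/-- `dat = (n₁,…,n_r; m₁,…,m_r; ζ₁,…,ζ_r)` is the extended GK datum of the reduced
form `B` with `GK(B) = a`. -/
def IsEGKOfReduced (O : Subring F) {n : ℕ} (B : Matrix (Fin n) (Fin n) F)
    (a : Fin n → ℕ) (dat : EGKDatum) : Prop :=
  StrictMono dat.2.2.1 ∧
  (∀ s, 0 < dat.2.1 s) ∧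
  (∀ t : Fin n, ∃ s, a t = dat.2.2.1 s) ∧
  (∀ s, (Finset.univ.filter fun t => a t = dat.2.2.1 s).card = dat.2.1 s) ∧
  ∀ s : Fin dat.1,
    ∃ h : (∑ u ∈ Finset.univ.filter (fun u => u ≤ s), dat.2.1 u) ≤ n,
      ((∑ u ∈ Finset.univ.filter (fun u => u ≤ s), dat.2.1 u) % 2 = 0 →
        XiIs O (leadBlock B _ h) (dat.2.2.2 s)) ∧
      ((∑ u ∈ Finset.univ.filter (fun u => u ≤ s), dat.2.1 u) % 2 = 1 →
        EtaIs (leadBlock B _ h) (dat.2.2.2 s))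

/-- `dat` is the extended GK datum of (the lattice with Gram matrix) `B`. -/
def IsEGK (O : Subring F) (ord : F → ℤ) {n : ℕ} (B : Matrix (Fin n) (Fin n) F)
    (dat : EGKDatum) : Prop :=
  ∃ (B' : Matrix (Fin n) (Fin n) F) (a : Fin n → ℕ) (σ : Fin n → Fin n),
    EquivO O ord B B' ∧ IsReducedForm O ord B' a σ ∧ IsEGKOfReduced O B' a dat

/-- `dat` is the truncated extended GK datum `EGK(B)^{≤1}`: the EGK datum of the
upper-left block (of size the number of GK entries `≤ 1`) of a reduced form
equivalent to `B`. -/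
def IsEGKle1 (O : Subring F) (ord : F → ℤ) {n : ℕ} (B : Matrix (Fin n) (Fin n) F)
    (dat : EGKDatum) : Prop :=
  ∃ (B' : Matrix (Fin n) (Fin n) F) (a : Fin n → ℕ) (σ : Fin n → Fin n)
    (h : (Finset.univ.filter fun t => a t ≤ 1).card ≤ n),
    EquivO O ord B B' ∧ IsReducedForm O ord B' a σ ∧
    IsEGK O ord (leadBlock B' _ h) dat

/-- truncated EGK datum computed from a given reduced form `B` itself. -/
def TruncEGKOfReduced (O : Subring F) (ord : F → ℤ) {n : ℕ}
    (B : Matrix (Fin n) (Fin n) F) (dat : EGKDatum) : Prop :=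
  ∃ (a : Fin n → ℕ) (σ : Fin n → Fin n)
    (h : (Finset.univ.filter fun t => a t ≤ 1).card ≤ n),
    IsReducedForm O ord B a σ ∧ IsEGK O ord (leadBlock B _ h) dat

/-- `c` is the non-decreasing rearrangement of the concatenation of `a` and `b`. -/
def IsMergeOf {m k n : ℕ} (a : Fin m → ℕ) (b : Fin k → ℕ) (c : Fin n → ℕ) : Prop :=
  Monotone c ∧ ∃ φ : (Fin m ⊕ Fin k) ≃ Fin n, ∀ x, c (φ x) = Sum.elim a b x

/-- the value `Q(x) = ᵗx·C·x` of the quadratic form with Gram matrix `C`. -/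
def Qval {n : ℕ} (C : Matrix (Fin n) (Fin n) F) (x : Fin n → F) : F :=
  dotProduct x (C.mulVec x)

/-- the sublattice `B(A)` of `A = 𝔬ⁿ`: integral vectors with `Q(x) ∈ 2𝔬`. -/
def BAset (O : Subring F) {n : ℕ} (C : Matrix (Fin n) (Fin n) F) : Set (Fin n → F) :=
  {x | (∀ s, x s ∈ O) ∧ MemScale O 2 (Qval C x)}

/-- membership in the sublattice `Z(A)`: the radical of the quadratic form
`(1/2)Q mod 2` on `B(A)/2A`. -/
def InZA (O : Subring F) {n : ℕ} (C : Matrix (Fin n) (Fin n) F) (x : Fin n → F) : Prop :=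
  x ∈ BAset O C ∧ MemScale O 4 (Qval C x) ∧
    ∀ y ∈ BAset O C, MemScale O 2 (dotProduct x (C.mulVec y))

/-- the cardinality of the residue space `V̄ = B(A)/Z(A)`. -/
def residueSpaceCard (O : Subring F) {n : ℕ} (C : Matrix (Fin n) (Fin n) F) : ℕ :=
  Nat.card (Quot (fun x y : (BAset O C : Set (Fin n → F)) => InZA O C (x.1 - y.1)))

/-- the norm ideal of the lattice with Gram matrix `C` is all of `𝔬`. -/
def NormUnit (O : Subring F) (ord : F → ℤ) {n : ℕ} (C : Matrix (Fin n) (Fin n) F) : Prop :=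
  ∃ x : Fin n → F, (∀ s, x s ∈ O) ∧ Qval C x ≠ 0 ∧ ord (Qval C x) = 0

/-- the residue quadratic form `q̄` on `V̄ = B(A)/Z(A)` is split: `V̄` has even
dimension `2k` and carries a totally isotropic subspace of dimension `k`. -/
def ResidueSplit (O : Subring F) (ord : F → ℤ) (q : ℕ) {n : ℕ}
    (C : Matrix (Fin n) (Fin n) F) : Prop :=
  ∃ k : ℕ, residueSpaceCard O C = q ^ (2 * k) ∧
    ∃ vs : Fin k → (Fin n → F),
      (∀ t, vs t ∈ BAset O C) ∧
      (∀ t, MemScale O 4 (Qval C (vs t))) ∧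
      (∀ s t, MemScale O 2 (dotProduct (vs s) (C.mulVec (vs t)))) ∧
      ∀ c : Fin k → F, (∀ t, c t ∈ O) → (∃ t, c t ≠ 0 ∧ ord (c t) = 0) →
        ¬ InZA O C (∑ t, c t • vs t)

/-- a square matrix over `F` of some size. -/
def SqB (F : Type) [Field F] : Type := (k : ℕ) × Matrix (Fin k) (Fin k) F

/-- total size of a list of square matrices. -/
def dims : List (SqB F) → ℕ
  | [] => 0
  | a :: t => a.1 + dims t

/-- orthogonal sum of a list of square matrices. -/
def listSum : (l : List (SqB F)) → Matrix (Fin (dims l)) (Fin (dims l)) F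
  | [] => 0
  | a :: t => orthSum a.2 (listSum t)

/-- a `2×2` block `2^i·[[2a, u],[u, 2b]]` with `a, b ∈ 𝔬`, `u ∈ 𝔬ˣ`. -/
def IsDagBlock (O : Subring F) (ord : F → ℤ) (π : F) (i : ℤ) (blk : SqB F) : Prop :=
  ∃ a u b : F, a ∈ O ∧ b ∈ O ∧ u ∈ O ∧ u ≠ 0 ∧ ord u = 0 ∧
    blk = ⟨2, π ^ i • !![2*a, u; u, 2*b]⟩

/-- The data of a semisimple quadratic `F`-algebra `E` (a quadratic field extension or
`F × F`), together with a generator `ω` of its maximal order `𝔬_E = 𝔬 + 𝔬ω`,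
the valuation `d` of the discriminant of `E/F`, and the invariant `ξ`. -/
structure QuadAlgebraAxioms (O : Subring F) (ord : F → ℤ)
    (E : Type) [CommRing E] [Algebra F E] (ω : E) (d : ℕ) (ξ : ℤ) : Prop where
  finrank_two : Module.finrank F E = 2
  reduced : ∀ x : E, x * x = 0 → x = 0
  indep : ∀ a b : F, algebraMap F E a + algebraMap F E b * ω = 0 → a = 0 ∧ b = 0
  trace_mem : Algebra.trace F E ω ∈ O
  norm_mem : Algebra.norm F ω ∈ O
  max_order : ∀ x : E, Algebra.trace F E x ∈ O → Algebra.norm F x ∈ O →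
    ∃ a b : F, a ∈ O ∧ b ∈ O ∧ x = algebraMap F E a + algebraMap F E b * ω
  disc_ne : (Algebra.trace F E ω) ^ 2 - 4 * Algebra.norm F ω ≠ 0
  disc_ord : ord ((Algebra.trace F E ω) ^ 2 - 4 * Algebra.norm F ω) = d
  xi_def : ξ = if (∃ x : E, x * x = x ∧ x ≠ 0 ∧ x ≠ 1) then 1 else if d = 0 then -1 else 0

/-- Gram matrix of the norm form on the order `𝔬_{E,f} = 𝔬 + 𝔬·ϖ^f ω` of conductor `f`,
with respect to the basis `(1, ϖ^f ω)`; here `T = tr(ω)` and `S = N(ω)`. -/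
def normGram (π T S : F) (f : ℕ) : Matrix (Fin 2) (Fin 2) F :=
  !![1, π ^ f * T / 2; π ^ f * T / 2, π ^ (2 * f) * S]

/-- the order `𝔬_{E,f} = 𝔬 + 𝔭^f 𝔬_E`, as a subset of `E`. -/
def orderSet (O : Subring F) (π : F) {E : Type} [CommRing E] [Algebra F E]
    (ω : E) (f : ℕ) : Set E :=
  {x | ∃ a b : F, a ∈ O ∧ b ∈ O ∧ x = algebraMap F E a + algebraMap F E (b * π ^ f) * ω}

/-- the set `V_N = {α ∈ 𝔬_{E,f} : 𝒩(α) ≡ 1 mod 𝔭^N}`. -/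
def normOneSet (O : Subring F) (ord : F → ℤ) (π : F) {E : Type} [CommRing E] [Algebra F E]
    (ω : E) (f N : ℕ) : Set E :=
  {x ∈ orderSet O π ω f |
    Algebra.norm F x - 1 = 0 ∨ (N : ℤ) ≤ ord (Algebra.norm F x - 1)}

/-- a rank‑2 lattice Gram matrix is indecomposable: not `GL₂(𝔬)`-equivalent to an
orthogonal sum of two rank‑1 lattices. -/
def Indecomposable2 (O : Subring F) (ord : F → ℤ) (G : Matrix (Fin 2) (Fin 2) F) : Prop :=
  ¬ ∃ B' : Matrix (Fin 2) (Fin 2) F, EquivO O ord G B' ∧ B' 0 1 = 0 ∧ B' 1 0 = 0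

/-!
In the basis `(1, ϖ^f ω)`, `L` is the binary form `x² + t·xy + n·y²` with `t = ϖ^f tr ω` and
`n = ϖ^{2f} 𝒩 ω`, whose discriminant `t² - 4n` has order `2f + d`, so `ord det L = 2f + d - 2e`.
If `t/2` is integral, completing the square gives `L ≅ (1) ⊥ (det L)` and `ord det L ≥ 0`.
Otherwise `ord t < ord 2 = e`, so `t²` dominates the discriminant and `L` is
`ϖ^{ord t - e}`-modular of negative level; it is then indecomposable, because an orthogonal sum
of two integral rank-one lattices has `ord det ≥ 0`. An integral binary lattice
representing a unit has either a single Jordan level `ord det / 2 ≤ 0` or the two levels `0`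
and `ord det`, so in both cases the levels are forced, and which case occurs is decided by the
sign of `2f + d - 2e` alone.
-/

variable {O : Subring F} {ord : F → ℤ} {p q : ℕ} {π : F}

namespace LocalFieldAxioms

lemma ord_one (hF : LocalFieldAxioms O ord p q) : ord 1 = 0 := by
  have h := hF.ord_mul 1 1 one_ne_zero one_ne_zero
  rw [mul_one] at h
  omega

lemma ord_neg (hF : LocalFieldAxioms O ord p q) {x : F} (hx : x ≠ 0) : ord (-x) = ord x := by
  have h := hF.ord_mul (-1) (-1) (by norm_num) (by norm_num)
  rw [neg_one_mul, neg_neg, hF.ord_one] at h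
  rw [← neg_one_mul, hF.ord_mul _ _ (by norm_num) hx]
  omega

lemma ord_inv (hF : LocalFieldAxioms O ord p q) {x : F} (hx : x ≠ 0) : ord x⁻¹ = -ord x := by
  have h := hF.ord_mul x x⁻¹ hx (inv_ne_zero hx)
  rw [mul_inv_cancel₀ hx, hF.ord_one] at h
  omega

lemma ord_div (hF : LocalFieldAxioms O ord p q) {x y : F} (hx : x ≠ 0) (hy : y ≠ 0) :
    ord (x / y) = ord x - ord y := by
  rw [div_eq_mul_inv, hF.ord_mul _ _ hx (inv_ne_zero hy), hF.ord_inv hy, sub_eq_add_neg]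

lemma ord_pow (hF : LocalFieldAxioms O ord p q) {x : F} (hx : x ≠ 0) (n : ℕ) :
    ord (x ^ n) = n * ord x := by
  induction n with
  | zero => simpa using hF.ord_one
  | succ k ih =>
    rw [pow_succ, hF.ord_mul _ _ (pow_ne_zero _ hx) hx, ih]
    push_cast
    ring

lemma ord_zpow (hF : LocalFieldAxioms O ord p q) {x : F} (hx : x ≠ 0) (k : ℤ) :
    ord (x ^ k) = k * ord x := by
  obtain ⟨n, rfl | rfl⟩ := k.eq_nat_or_neg
  · rw [zpow_natCast, hF.ord_pow hx]
  · rw [zpow_neg, zpow_natCast, hF.ord_inv (pow_ne_zero _ hx), hF.ord_pow hx, neg_mul]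

lemma ord_zpow_mul (hF : LocalFieldAxioms O ord p q) (hπ : π ≠ 0 ∧ ord π = 1) {x : F}
    (hx : x ≠ 0) (k : ℤ) : ord (π ^ k * x) = k + ord x := by
  rw [hF.ord_mul _ _ (zpow_ne_zero _ hπ.1) hx, hF.ord_zpow hπ.1, hπ.2, mul_one]

lemma mem_of_ord_nonneg (hF : LocalFieldAxioms O ord p q) {x : F} (h : 0 ≤ ord x) : x ∈ O :=
  (hF.mem_integers x).2 (Or.inr h)

lemma ord_nonneg (hF : LocalFieldAxioms O ord p q) {x : F} (hx : x ∈ O) (h0 : x ≠ 0) :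
    0 ≤ ord x :=
  ((hF.mem_integers x).1 hx).resolve_left h0

lemma zpow_neg_mul_mem (hF : LocalFieldAxioms O ord p q) (hπ : π ≠ 0 ∧ ord π = 1) {x : F}
    {k : ℤ} (hx : x = 0 ∨ k ≤ ord x) : π ^ (-k) * x ∈ O := by
  rcases eq_or_ne x 0 with rfl | hx0
  · simp
  · exact hF.mem_of_ord_nonneg (by rw [hF.ord_zpow_mul hπ hx0]; linarith [hx.resolve_left hx0])

lemma le_ord_add (hF : LocalFieldAxioms O ord p q) {x y : F} {k : ℤ}
    (hx : x = 0 ∨ k ≤ ord x) (hy : y = 0 ∨ k ≤ ord y) : x + y = 0 ∨ k ≤ ord (x + y) := by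
  by_cases hx0 : x = 0
  · subst hx0; simpa using hy
  by_cases hy0 : y = 0
  · subst hy0; simpa using hx
  by_cases hxy : x + y = 0
  · exact Or.inl hxy
  exact Or.inr ((le_min (hx.resolve_left hx0) (hy.resolve_left hy0)).trans
    (hF.min_le_ord_add x y hx0 hy0 hxy))

lemma ord_add_of_lt (hF : LocalFieldAxioms O ord p q) {x y : F} (hx : x ≠ 0)
    (hy : y = 0 ∨ ord x < ord y) : x + y ≠ 0 ∧ ord (x + y) = ord x := by
  rcases eq_or_ne y 0 with rfl | hy0
  · simpa using hx
  have hlt := hy.resolve_left hy0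
  have hxy : x + y ≠ 0 := by
    intro h
    rw [eq_neg_of_add_eq_zero_right h, hF.ord_neg hx] at hlt
    exact lt_irrefl _ hlt
  have hge := hF.min_le_ord_add x y hx hy0 hxy
  have hle := hF.min_le_ord_add (x + y) (-y) hxy (neg_ne_zero.2 hy0) (by simpa using hx)
  rw [add_neg_cancel_right, hF.ord_neg hy0] at hle
  refine ⟨hxy, le_antisymm ?_ (by omega)⟩
  rcases min_choice (ord (x + y)) (ord y) with h | h <;> omega

lemma two_ne_zero (hF : LocalFieldAxioms O ord p q) : (2 : F) ≠ 0 := by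
  have := hF.charZero
  norm_num

lemma four_ne_zero (hF : LocalFieldAxioms O ord p q) : (4 : F) ≠ 0 := by
  have := hF.charZero
  norm_num

lemma ord_four (hF : LocalFieldAxioms O ord p q) : ord (4 : F) = 2 * ord (2 : F) := by
  rw [show (4 : F) = 2 * 2 by norm_num, hF.ord_mul _ _ hF.two_ne_zero hF.two_ne_zero]
  ring

end LocalFieldAxioms

open Matrix

section QuadraticForm

variable {n : ℕ}

lemma qval_transpose_mul_mul (B U : Matrix (Fin n) (Fin n) F) (x : Fin n → F) :
    Qval (Uᵀ * B * U) x = Qval B (U *ᵥ x) := by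
  simp only [Qval, ← mulVec_mulVec, dotProduct_mulVec, vecMul_transpose]

lemma qval_smul (c : F) (C : Matrix (Fin n) (Fin n) F) (x : Fin n → F) :
    Qval (c • C) x = c * Qval C x := by
  simp [Qval, smul_mulVec, dotProduct_smul]

lemma qval_single (C : Matrix (Fin n) (Fin n) F) (t : Fin n) :
    Qval C (Pi.single t 1) = C t t := by
  simp [Qval]

lemma mulVec_mem {U : Matrix (Fin n) (Fin n) F} {x : Fin n → F} (hU : ∀ a b, U a b ∈ O)
    (hx : ∀ s, x s ∈ O) (s : Fin n) : (U *ᵥ x) s ∈ O :=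
  show ∑ b, U s b * x b ∈ O from O.sum_mem fun b _ => O.mul_mem (hU s b) (hx b)

lemma qval_mem {C : Matrix (Fin n) (Fin n) F} {x : Fin n → F} (hC : ∀ a b, C a b ∈ O)
    (hx : ∀ s, x s ∈ O) : Qval C x ∈ O :=
  show ∑ a, x a * (C *ᵥ x) a ∈ O from O.sum_mem fun a _ => O.mul_mem (hx a) (mulVec_mem hC hx a)

def IsIntegralForm (O : Subring F) (C : Matrix (Fin n) (Fin n) F) : Prop :=
  ∀ x : Fin n → F, (∀ s, x s ∈ O) → Qval C x ∈ O

lemma IsIntegralForm.diag_mem {C : Matrix (Fin n) (Fin n) F} (hC : IsIntegralForm O C)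
    (t : Fin n) : C t t ∈ O := by
  rw [← qval_single C t]
  refine hC _ fun s => ?_
  by_cases h : s = t
  · subst h; simp [O.one_mem]
  · simp [h, O.zero_mem]

end QuadraticForm

section GLO

variable {n : ℕ}

lemma isGLO_one (hF : LocalFieldAxioms O ord p q) : IsGLO O ord (1 : Matrix (Fin n) (Fin n) F) :=
  ⟨fun a b => by by_cases h : a = b <;> simp [one_apply, h, O.one_mem, O.zero_mem],
    by simp, by simpa using hF.ord_one⟩

lemma IsGLO.mul (hF : LocalFieldAxioms O ord p q) {U V : Matrix (Fin n) (Fin n) F}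
    (hU : IsGLO O ord U) (hV : IsGLO O ord V) : IsGLO O ord (U * V) :=
  ⟨fun a b => by rw [mul_apply]; exact O.sum_mem fun c _ => O.mul_mem (hU.1 a c) (hV.1 c b),
    by rw [det_mul]; exact mul_ne_zero hU.2.1 hV.2.1,
    by rw [det_mul, hF.ord_mul _ _ hU.2.1 hV.2.1, hU.2.2, hV.2.2, add_zero]⟩

/-- The adjugate of a matrix over `𝔬` is again over `𝔬`, so `U⁻¹ = det U⁻¹ • adj U`
is integral as soon as `det U` is a unit. -/
lemma IsGLO.inv (hF : LocalFieldAxioms O ord p q) {U : Matrix (Fin n) (Fin n) F}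
    (hU : IsGLO O ord U) : IsGLO O ord U⁻¹ := by
  obtain ⟨hmem, hdet, hord⟩ := hU
  have hadj : ∀ a b, U.adjugate a b ∈ O := by
    let V : Matrix (Fin n) (Fin n) O := fun a b => ⟨U a b, hmem a b⟩
    have hUV : U = O.subtype.mapMatrix V := rfl
    intro a b
    rw [hUV, ← RingHom.map_adjugate]
    exact (V.adjugate a b).2
  have hinv : U.det⁻¹ ∈ O := hF.mem_of_ord_nonneg (by rw [hF.ord_inv hdet, hord]; rfl)
  refine ⟨fun a b => ?_, ?_, ?_⟩
  · rw [inv_def, Ring.inverse_eq_inv', Matrix.smul_apply, smul_eq_mul]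
    exact O.mul_mem hinv (hadj a b)
  · rw [det_nonsing_inv, Ring.inverse_eq_inv']
    exact inv_ne_zero hdet
  · rw [det_nonsing_inv, Ring.inverse_eq_inv', hF.ord_inv hdet, hord, neg_zero]

namespace EquivO

lemma refl (hF : LocalFieldAxioms O ord p q) (B : Matrix (Fin n) (Fin n) F) :
    EquivO O ord B B :=
  ⟨1, isGLO_one hF, by simp⟩

lemma trans (hF : LocalFieldAxioms O ord p q) {A B C : Matrix (Fin n) (Fin n) F}
    (h₁ : EquivO O ord A B) (h₂ : EquivO O ord B C) : EquivO O ord A C := by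
  obtain ⟨U, hU, rfl⟩ := h₁
  obtain ⟨V, hV, rfl⟩ := h₂
  exact ⟨U * V, hU.mul hF hV, by simp only [transpose_mul, mul_assoc]⟩

lemma symm (hF : LocalFieldAxioms O ord p q) {A B : Matrix (Fin n) (Fin n) F}
    (h : EquivO O ord A B) : EquivO O ord B A := by
  obtain ⟨U, hU, rfl⟩ := h
  have hunit : IsUnit U.det := isUnit_iff_ne_zero.2 hU.2.1
  refine ⟨U⁻¹, hU.inv hF, ?_⟩
  rw [transpose_nonsing_inv, mul_assoc, mul_assoc,
    mul_nonsing_inv _ hunit, mul_one, ← mul_assoc,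
    nonsing_inv_mul _ (by rwa [det_transpose]), one_mul]

lemma ord_det (hF : LocalFieldAxioms O ord p q) {A B : Matrix (Fin n) (Fin n) F}
    (h : EquivO O ord A B) (hA : A.det ≠ 0) : B.det ≠ 0 ∧ ord B.det = ord A.det := by
  obtain ⟨U, ⟨-, hU, hUo⟩, rfl⟩ := h
  rw [det_mul, det_mul, det_transpose]
  refine ⟨mul_ne_zero (mul_ne_zero hU hA) hU, ?_⟩
  rw [hF.ord_mul _ _ (mul_ne_zero hU hA) hU, hF.ord_mul _ _ hU hA, hUo]
  ring

lemma isIntegralForm {A B : Matrix (Fin n) (Fin n) F} (h : EquivO O ord A B)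
    (hA : IsIntegralForm O A) : IsIntegralForm O B := by
  obtain ⟨U, hU, rfl⟩ := h
  intro x hx
  rw [qval_transpose_mul_mul]
  exact hA _ (mulVec_mem hU.1 hx)

lemma normUnit (hF : LocalFieldAxioms O ord p q) {A B : Matrix (Fin n) (Fin n) F}
    (h : EquivO O ord A B) (hA : NormUnit O ord A) : NormUnit O ord B := by
  obtain ⟨V, hV, rfl⟩ := h.symm hF
  obtain ⟨x, hx, hQ⟩ := hA
  rw [qval_transpose_mul_mul] at hQ
  exact ⟨V *ᵥ x, mulVec_mem hV.1 hx, hQ⟩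

end EquivO

end GLO

section Jordan

lemma isUnimodularMat_submatrix_equiv {ι κ : Type} [Fintype ι] [DecidableEq ι] [Fintype κ]
    [DecidableEq κ] (e : ι ≃ κ) (C : Matrix κ κ F) :
    IsUnimodularMat O ord (C.submatrix e e) ↔ IsUnimodularMat O ord C := by
  simp only [IsUnimodularMat, det_submatrix_equiv_self, submatrix_apply]
  refine ⟨fun ⟨h, h'⟩ => ⟨fun a b => ?_, h'⟩, fun ⟨h, h'⟩ => ⟨fun a b => h _ _, h'⟩⟩
  simpa using h (e.symm a) (e.symm b)

lemma isUnimodularMat_unique {ι : Type} [Fintype ι] [DecidableEq ι] [Unique ι]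
    (C : Matrix ι ι F) :
    IsUnimodularMat O ord C ↔
      C default default ∈ O ∧ C default default ≠ 0 ∧ ord (C default default) = 0 := by
  simp only [IsUnimodularMat, det_unique, Unique.forall_iff]

variable {n : ℕ}

lemma isJordanMatrix_iff_of_forall_eq [NeZero n] {B : Matrix (Fin n) (Fin n) F}
    {m : Fin n → ℤ} {i : ℤ} (hm : ∀ s, m s = i) :
    IsJordanMatrix O ord π B m ↔ IsModularMat O ord π B i := by
  have hsub := isUnimodularMat_submatrix_equiv (O := O) (ord := ord)
    (Equiv.subtypeUnivEquiv hm) (π ^ (-i) • B)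
  constructor
  · rintro ⟨-, hJ⟩
    exact hsub.1 (hJ i ⟨0, hm 0⟩)
  · intro h
    refine ⟨fun s t hst => absurd ((hm s).trans (hm t).symm) hst, ?_⟩
    rintro j ⟨s, rfl⟩
    obtain rfl := hm s
    exact hsub.2 h

lemma isJordanMatrix_fin_two_iff_of_ne (hF : LocalFieldAxioms O ord p q)
    {B : Matrix (Fin 2) (Fin 2) F} {m : Fin 2 → ℤ} (hm : m 0 ≠ m 1) :
    IsJordanMatrix O ord π B m ↔ B 0 1 = 0 ∧ B 1 0 = 0 ∧
      ∀ t, π ^ (-m t) * B t t ≠ 0 ∧ ord (π ^ (-m t) * B t t) = 0 := by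
  have hinj : ∀ s t, m s = m t → s = t := by
    intro s t h
    fin_cases s <;> fin_cases t <;> first | rfl | exact absurd h hm | exact absurd h.symm hm
  have hblock : ∀ t, IsModularMat O ord π (B.submatrix (fun s : {s // m s = m t} => (s : Fin 2))
      (fun s : {s // m s = m t} => (s : Fin 2))) (m t) ↔
      π ^ (-m t) * B t t ≠ 0 ∧ ord (π ^ (-m t) * B t t) = 0 := by
    intro t
    let _ : Unique {s // m s = m t} :=
      { default := ⟨t, rfl⟩, uniq := fun s => Subtype.ext (hinj _ _ s.2) }
    rw [IsModularMat, isUnimodularMat_unique]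
    exact ⟨fun h => h.2, fun h => ⟨hF.mem_of_ord_nonneg h.2.ge, h⟩⟩
  constructor
  · rintro ⟨hoff, hblk⟩
    exact ⟨hoff 0 1 hm, hoff 1 0 hm.symm, fun t => (hblock t).1 (hblk _ ⟨t, rfl⟩)⟩
  · rintro ⟨h01, h10, hdiag⟩
    refine ⟨fun s t hst => ?_, ?_⟩
    · fin_cases s <;> fin_cases t <;> simp_all
    · rintro j ⟨t, rfl⟩
      exact (hblock t).2 (hdiag t)

lemma HasJordanComponent.of_equivO (hF : LocalFieldAxioms O ord p q)
    {A B : Matrix (Fin n) (Fin n) F} {i : ℤ} (h : EquivO O ord A B)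
    (hB : HasJordanComponent O ord π B i) : HasJordanComponent O ord π A i := by
  obtain ⟨B', m, hBB', hJ, hs⟩ := hB
  exact ⟨B', m, h.trans hF hBB', hJ, hs⟩

lemma hasJordanComponent_of_isModularMat (hF : LocalFieldAxioms O ord p q) [NeZero n]
    {B : Matrix (Fin n) (Fin n) F} {i : ℤ} (h : IsModularMat O ord π B i) :
    HasJordanComponent O ord π B i :=
  ⟨B, fun _ => i, EquivO.refl hF B, (isJordanMatrix_iff_of_forall_eq fun _ => rfl).2 h, 0, rfl⟩

lemma hasJordanComponent_diag (hF : LocalFieldAxioms O ord p q) (hπ : π ≠ 0 ∧ ord π = 1)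
    {u : F} (hu : u ≠ 0) (huo : ord u = 0) (k : ℕ) {i : ℤ} (hi : i = 0 ∨ i = k) :
    HasJordanComponent O ord π !![1, 0; 0, u * π ^ k] i := by
  rcases Nat.eq_zero_or_pos k with rfl | hk
  · obtain rfl : i = 0 := by simpa using hi
    refine hasJordanComponent_of_isModularMat hF ⟨fun a b => ?_, ?_, ?_⟩ <;>
      simp only [neg_zero, zpow_zero, one_smul, pow_zero, mul_one]
    · fin_cases a <;> fin_cases b <;> simp [O.one_mem, O.zero_mem, hF.mem_of_ord_nonneg huo.ge]
    · simpa [det_fin_two] using hu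
    · simpa [det_fin_two] using huo
  · have hunit : π ^ (-(k : ℤ)) * (u * π ^ k) = u := by
      rw [mul_left_comm, ← zpow_natCast, ← zpow_add₀ hπ.1, neg_add_cancel, zpow_zero, mul_one]
    refine ⟨_, ![0, (k : ℤ)], EquivO.refl hF _,
      (isJordanMatrix_fin_two_iff_of_ne hF (by simp; omega)).2 ⟨rfl, rfl, fun t => ?_⟩, ?_⟩
    · fin_cases t
      · simp [hF.ord_one]
      · show π ^ (-(k : ℤ)) * (u * π ^ k) ≠ 0 ∧ ord (π ^ (-(k : ℤ)) * (u * π ^ k)) = 0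
        rw [hunit]
        exact ⟨hu, huo⟩
    · rcases hi with rfl | rfl
      exacts [⟨0, rfl⟩, ⟨1, rfl⟩]

end Jordan

section Levels

variable {n : ℕ}

lemma IsModularMat.ord_det (hF : LocalFieldAxioms O ord p q) (hπ : π ≠ 0 ∧ ord π = 1)
    {B : Matrix (Fin n) (Fin n) F} {i : ℤ} (h : IsModularMat O ord π B i) :
    B.det ≠ 0 ∧ ord B.det = n * i := by
  obtain ⟨-, hdet, hord⟩ := h
  rw [det_smul, Fintype.card_fin] at hdet hord
  have hB : B.det ≠ 0 := right_ne_zero_of_mul hdet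
  refine ⟨hB, ?_⟩
  rw [hF.ord_mul _ _ (left_ne_zero_of_mul hdet) hB, ← zpow_natCast, ← _root_.zpow_mul,
    hF.ord_zpow hπ.1, hπ.2] at hord
  linarith

lemma IsModularMat.nonpos (hF : LocalFieldAxioms O ord p q) (hπ : π ≠ 0 ∧ ord π = 1)
    {B : Matrix (Fin n) (Fin n) F} {i : ℤ} (h : IsModularMat O ord π B i)
    (hB : NormUnit O ord B) : i ≤ 0 := by
  obtain ⟨x, hx, hQ0, hQ⟩ := hB
  have hmem := qval_mem h.1 hx
  rw [qval_smul] at hmem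
  have := hF.ord_nonneg hmem (mul_ne_zero (zpow_ne_zero _ hπ.1) hQ0)
  rw [hF.ord_zpow_mul hπ hQ0, hQ] at this
  omega

lemma IsJordanMatrix.levels_fin_two (hF : LocalFieldAxioms O ord p q)
    (hπ : π ≠ 0 ∧ ord π = 1) {B : Matrix (Fin 2) (Fin 2) F} {m : Fin 2 → ℤ}
    (hJ : IsJordanMatrix O ord π B m) (hint : IsIntegralForm O B) (hunit : NormUnit O ord B)
    (s : Fin 2) :
    (2 * m s = ord B.det ∧ m s ≤ 0) ∨ (0 ≤ ord B.det ∧ (m s = 0 ∨ m s = ord B.det)) := by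
  by_cases hm : m 0 = m 1
  · have hall : ∀ t, m t = m s := by
      intro t
      fin_cases s <;> fin_cases t <;> simp [hm]
    have hmod := (isJordanMatrix_iff_of_forall_eq hall).1 hJ
    have hord := (hmod.ord_det hF hπ).2
    exact Or.inl ⟨by rw [hord]; norm_num, hmod.nonpos hF hπ hunit⟩
  obtain ⟨h01, h10, hdiag⟩ := (isJordanMatrix_fin_two_iff_of_ne hF hm).1 hJ
  have hBt : ∀ t, B t t ≠ 0 ∧ ord (B t t) = m t := fun t => by
    obtain ⟨h0, ho⟩ := hdiag t
    have hB := right_ne_zero_of_mul h0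
    rw [hF.ord_zpow_mul hπ hB] at ho
    exact ⟨hB, by omega⟩
  have hnonneg : ∀ t, 0 ≤ m t := fun t =>
    (hBt t).2 ▸ hF.ord_nonneg (hint.diag_mem t) (hBt t).1
  have hdet : ord B.det = m 0 + m 1 := by
    rw [det_fin_two, h01, zero_mul, sub_zero, hF.ord_mul _ _ (hBt 0).1 (hBt 1).1,
      (hBt 0).2, (hBt 1).2]
  -- if both levels were positive, every value of the form would lie in `𝔭`
  have hzero : m 0 = 0 ∨ m 1 = 0 := by
    by_contra! hpos
    obtain ⟨x, hx, hQ0, hQ⟩ := hunit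
    have hterm : ∀ t, B t t * (x t * x t) = 0 ∨ 1 ≤ ord (B t t * (x t * x t)) := by
      intro t
      by_cases hxt : x t = 0
      · simp [hxt]
      right
      rw [hF.ord_mul _ _ (hBt t).1 (mul_ne_zero hxt hxt), hF.ord_mul _ _ hxt hxt, (hBt t).2]
      have hmt : m t ≠ 0 := by fin_cases t; exacts [hpos.1, hpos.2]
      have := hF.ord_nonneg (hx t) hxt
      have := hnonneg t
      omega
    have hQx : Qval B x = B 0 0 * (x 0 * x 0) + B 1 1 * (x 1 * x 1) := by
      simp [Qval, mulVec, dotProduct, Fin.sum_univ_two, h01, h10]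
      ring
    rcases hF.le_ord_add (hterm 0) (hterm 1) with h | h <;> rw [← hQx] at h
    · exact hQ0 h
    · omega
  have := hnonneg 0
  have := hnonneg 1
  right
  rw [hdet]
  fin_cases s <;> simp <;> omega

lemma HasJordanComponent.levels_fin_two (hF : LocalFieldAxioms O ord p q)
    (hπ : π ≠ 0 ∧ ord π = 1) {B : Matrix (Fin 2) (Fin 2) F} {i : ℤ}
    (h : HasJordanComponent O ord π B i) (hint : IsIntegralForm O B) (hunit : NormUnit O ord B)
    (hdet : B.det ≠ 0) :
    (2 * i = ord B.det ∧ i ≤ 0) ∨ (0 ≤ ord B.det ∧ (i = 0 ∨ i = ord B.det)) := by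
  obtain ⟨B', m, hBB', hJ, s, rfl⟩ := h
  rw [← (hBB'.ord_det hF hdet).2]
  exact hJ.levels_fin_two hF hπ (hBB'.isIntegralForm hint) (hBB'.normUnit hF hunit) s

lemma indecomposable2_of_ord_det_neg (hF : LocalFieldAxioms O ord p q)
    {B : Matrix (Fin 2) (Fin 2) F} (hint : IsIntegralForm O B) (hdet : B.det ≠ 0)
    (hneg : ord B.det < 0) : Indecomposable2 O ord B := by
  rintro ⟨B', hBB', h01, -⟩
  obtain ⟨hdet', hord⟩ := hBB'.ord_det hF hdet
  have hint' := hBB'.isIntegralForm hint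
  rw [det_fin_two, h01, zero_mul, sub_zero] at hdet' hord
  rw [hF.ord_mul _ _ (left_ne_zero_of_mul hdet') (right_ne_zero_of_mul hdet')] at hord
  have := hF.ord_nonneg (hint'.diag_mem 0) (left_ne_zero_of_mul hdet')
  have := hF.ord_nonneg (hint'.diag_mem 1) (right_ne_zero_of_mul hdet')
  omega

end Levels

section BinaryForm

/-- Gram matrix of the binary form `x² + t·xy + n·y²`, i.e. of the norm form on `𝔬 + 𝔬α`
for `α` with trace `t` and norm `n`. -/
def binaryGram (t n : F) : Matrix (Fin 2) (Fin 2) F :=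
  !![1, t / 2; t / 2, n]

lemma normGram_eq_binaryGram (π T S : F) (f : ℕ) :
    normGram π T S f = binaryGram (π ^ f * T) (π ^ (2 * f) * S) :=
  rfl

lemma det_binaryGram (hF : LocalFieldAxioms O ord p q) (t n : F) :
    (binaryGram t n).det = -(t ^ 2 - 4 * n) / 4 := by
  have := hF.two_ne_zero
  have := hF.four_ne_zero
  rw [binaryGram, det_fin_two_of]
  field_simp
  ring

lemma ord_det_binaryGram (hF : LocalFieldAxioms O ord p q) {t n : F}
    (hΔ : t ^ 2 - 4 * n ≠ 0) :
    (binaryGram t n).det ≠ 0 ∧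
      ord (binaryGram t n).det = ord (t ^ 2 - 4 * n) - 2 * ord (2 : F) := by
  rw [det_binaryGram hF]
  refine ⟨div_ne_zero (neg_ne_zero.2 hΔ) hF.four_ne_zero, ?_⟩
  rw [hF.ord_div (neg_ne_zero.2 hΔ) hF.four_ne_zero, hF.ord_neg hΔ, hF.ord_four]

lemma isIntegralForm_binaryGram (hF : LocalFieldAxioms O ord p q) {t n : F} (ht : t ∈ O)
    (hn : n ∈ O) : IsIntegralForm O (binaryGram t n) := by
  intro x hx
  have := hF.two_ne_zero
  have hQ : Qval (binaryGram t n) x = x 0 * x 0 + t * (x 0 * x 1) + n * (x 1 * x 1) := by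
    simp [Qval, binaryGram, mulVec, dotProduct, Fin.sum_univ_two]
    field_simp
    ring
  rw [hQ]
  exact O.add_mem (O.add_mem (O.mul_mem (hx 0) (hx 0)) (O.mul_mem ht (O.mul_mem (hx 0) (hx 1))))
    (O.mul_mem hn (O.mul_mem (hx 1) (hx 1)))

lemma normUnit_binaryGram (hF : LocalFieldAxioms O ord p q) (t n : F) :
    NormUnit O ord (binaryGram t n) := by
  refine ⟨Pi.single 0 1, fun s => ?_, ?_⟩
  · fin_cases s <;> simp [O.one_mem, O.zero_mem]
  · simpa [qval_single, binaryGram] using hF.ord_one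

lemma ord_disc_cases (hF : LocalFieldAxioms O ord p q) {t n : F} (ht : t ∈ O) (hn : n ∈ O)
    (hΔ : t ^ 2 - 4 * n ≠ 0) :
    (t ≠ 0 ∧ ord t < ord (2 : F) ∧ ord (t ^ 2 - 4 * n) = 2 * ord t) ∨
      (t / 2 ∈ O ∧ 2 * ord (2 : F) ≤ ord (t ^ 2 - 4 * n)) := by
  have h4n : -(4 * n) = 0 ∨ 2 * ord (2 : F) ≤ ord (-(4 * n)) := by
    rcases eq_or_ne n 0 with rfl | hn0
    · simp
    right
    rw [hF.ord_neg (mul_ne_zero hF.four_ne_zero hn0),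
      hF.ord_mul _ _ hF.four_ne_zero hn0, hF.ord_four]
    linarith [hF.ord_nonneg hn hn0]
  rw [sub_eq_add_neg] at hΔ ⊢
  by_cases hsmall : t ≠ 0 ∧ ord t < ord (2 : F)
  · obtain ⟨ht0, hlt⟩ := hsmall
    have ht2 : ord (t ^ 2) = 2 * ord t := by rw [hF.ord_pow ht0]; norm_num
    refine Or.inl ⟨ht0, hlt, ?_⟩
    rw [(hF.ord_add_of_lt (pow_ne_zero 2 ht0) (h4n.imp_right fun h => by omega)).2, ht2]
  · right
    rcases eq_or_ne t 0 with rfl | ht0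
    · simpa [O.zero_mem] using h4n.resolve_left (by simpa using hΔ)
    have hge : ord (2 : F) ≤ ord t := not_lt.1 fun h => hsmall ⟨ht0, h⟩
    refine ⟨hF.mem_of_ord_nonneg (by rw [hF.ord_div ht0 hF.two_ne_zero]; omega),
      (hF.le_ord_add (Or.inr ?_) h4n).resolve_left hΔ⟩
    rw [hF.ord_pow ht0]
    push_cast
    omega

lemma isModularMat_binaryGram (hF : LocalFieldAxioms O ord p q) (hπ : π ≠ 0 ∧ ord π = 1)
    {t n : F} (hn : n ∈ O) (ht0 : t ≠ 0) (hlt : ord t < ord (2 : F))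
    (hΔ0 : t ^ 2 - 4 * n ≠ 0) (hΔ : ord (t ^ 2 - 4 * n) = 2 * ord t) :
    IsModularMat O ord π (binaryGram t n) (ord t - ord (2 : F)) := by
  set i := ord t - ord (2 : F)
  have h1 : (1 : F) = 0 ∨ i ≤ ord (1 : F) := Or.inr (by rw [hF.ord_one]; omega)
  have hc : t / 2 = 0 ∨ i ≤ ord (t / 2) := Or.inr (hF.ord_div ht0 hF.two_ne_zero).ge
  have hn' : n = 0 ∨ i ≤ ord n := by
    rcases eq_or_ne n 0 with h | hn0
    · exact Or.inl h
    · exact Or.inr (by linarith [hF.ord_nonneg hn hn0])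
  obtain ⟨hdet, hdeto⟩ := ord_det_binaryGram hF hΔ0
  have hzpow : (π ^ (-i)) ^ 2 ≠ 0 := pow_ne_zero _ (zpow_ne_zero _ hπ.1)
  refine ⟨fun a b => ?_, ?_, ?_⟩
  · fin_cases a <;> fin_cases b
    exacts [hF.zpow_neg_mul_mem hπ h1, hF.zpow_neg_mul_mem hπ hc, hF.zpow_neg_mul_mem hπ hc,
      hF.zpow_neg_mul_mem hπ hn']
  · rw [det_smul, Fintype.card_fin]
    exact mul_ne_zero hzpow hdet
  · rw [det_smul, Fintype.card_fin, hF.ord_mul _ _ hzpow hdet, hdeto, hΔ, ← zpow_natCast,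
      ← _root_.zpow_mul, hF.ord_zpow hπ.1, hπ.2]
    push_cast
    ring

lemma binaryGram_jordan_of_neg (hF : LocalFieldAxioms O ord p q) (hπ : π ≠ 0 ∧ ord π = 1)
    {t n : F} (ht : t ∈ O) (hn : n ∈ O) (hΔ0 : t ^ 2 - 4 * n ≠ 0) {j : ℤ}
    (hj : 2 * j = ord (t ^ 2 - 4 * n) - 2 * ord (2 : F)) (hj0 : j < 0) :
    (∀ i, HasJordanComponent O ord π (binaryGram t n) i ↔ i = j) ∧
      IsModularMat O ord π (binaryGram t n) j ∧ Indecomposable2 O ord (binaryGram t n) := by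
  obtain ⟨ht0, hlt, hΔ⟩ := (ord_disc_cases hF ht hn hΔ0).resolve_right fun ⟨_, hge⟩ => by omega
  obtain rfl : j = ord t - ord (2 : F) := by omega
  have hmod := isModularMat_binaryGram hF hπ hn ht0 hlt hΔ0 hΔ
  have hint := isIntegralForm_binaryGram hF ht hn
  obtain ⟨hdet, hdeto⟩ := ord_det_binaryGram hF hΔ0
  refine ⟨fun i => ⟨fun h => ?_, ?_⟩, hmod,
    indecomposable2_of_ord_det_neg hF hint hdet (by omega)⟩
  · have := h.levels_fin_two hF hπ hint (normUnit_binaryGram hF t n) hdet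
    omega
  · rintro rfl
    exact hasJordanComponent_of_isModularMat hF hmod

lemma binaryGram_equivO_diag (hF : LocalFieldAxioms O ord p q) {t n : F} (hc : t / 2 ∈ O) :
    EquivO O ord (binaryGram t n) !![1, 0; 0, (binaryGram t n).det] := by
  refine ⟨!![1, -(t / 2); 0, 1], ⟨fun a b => ?_, ?_, ?_⟩, ?_⟩
  · fin_cases a <;> fin_cases b <;> simp [O.one_mem, O.zero_mem, O.neg_mem hc]
  · simp [det_fin_two]
  · simpa [det_fin_two] using hF.ord_one
  · ext a b
    fin_cases a <;> fin_cases b <;> simp [binaryGram, det_fin_two, mul_apply, Fin.sum_univ_two]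
    ring

lemma binaryGram_jordan_of_nonneg (hF : LocalFieldAxioms O ord p q) (hπ : π ≠ 0 ∧ ord π = 1)
    {t n : F} (ht : t ∈ O) (hn : n ∈ O) (hΔ0 : t ^ 2 - 4 * n ≠ 0) {l : ℤ}
    (hl : ord (t ^ 2 - 4 * n) - 2 * ord (2 : F) = l) (k : ℕ) (hk : (k : ℤ) = l) :
    (∀ i, HasJordanComponent O ord π (binaryGram t n) i ↔ (i = 0 ∨ i = l)) ∧
      ∃ u : F, u ∈ O ∧ u ≠ 0 ∧ ord u = 0 ∧
        EquivO O ord (binaryGram t n) !![1, 0; 0, u * π ^ k] := by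
  subst hk
  obtain ⟨hc, -⟩ := (ord_disc_cases hF ht hn hΔ0).resolve_left fun ⟨_, hlt, hΔ⟩ => by omega
  obtain ⟨hdet, hdeto⟩ := ord_det_binaryGram hF hΔ0
  set u := (binaryGram t n).det / π ^ k
  have hπk : π ^ k ≠ 0 := pow_ne_zero _ hπ.1
  have hu0 : u ≠ 0 := div_ne_zero hdet hπk
  have huo : ord u = 0 := by rw [hF.ord_div hdet hπk, hF.ord_pow hπ.1, hπ.2]; omega
  have hequiv : EquivO O ord (binaryGram t n) !![1, 0; 0, u * π ^ k] := by
    rw [div_mul_cancel₀ _ hπk]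
    exact binaryGram_equivO_diag hF hc
  refine ⟨fun i => ⟨fun h => ?_, fun hi => ?_⟩,
    u, hF.mem_of_ord_nonneg huo.ge, hu0, huo, hequiv⟩
  · have := h.levels_fin_two hF hπ (isIntegralForm_binaryGram hF ht hn)
      (normUnit_binaryGram hF t n) hdet
    omega
  · exact (hasJordanComponent_diag hF hπ hu0 huo k hi).of_equivO hF hequiv

end BinaryForm

/-- Jordan splittings of `L = (𝔬_{E,f}, 𝒩)`. -/
theorem statement17 {F : Type} [Field F] (O : Subring F) (ord : F → ℤ) (q e : ℕ)
    (hF : LocalFieldAxioms O ord 2 q) (he : ord (2 : F) = e)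
    (π : F) (hπ : π ≠ 0 ∧ ord π = 1)
    (E : Type) [CommRing E] [Algebra F E] (ω : E) (d : ℕ) (ξ : ℤ)
    (hE : QuadAlgebraAxioms O ord E ω d ξ)
    (f : ℕ)
    (G : Matrix (Fin 2) (Fin 2) F)
    (hG : G = normGram π (Algebra.trace F E ω) (Algebra.norm F ω) f) :
    (d = 0 →
      (f < e →
        (∀ i : ℤ, HasJordanComponent O ord π G i ↔ i = (f : ℤ) - (e : ℤ)) ∧
        IsModularMat O ord π G ((f : ℤ) - (e : ℤ)) ∧ Indecomposable2 O ord G) ∧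
      (e ≤ f →
        (∀ i : ℤ, HasJordanComponent O ord π G i ↔
          (i = 0 ∨ i = 2 * (f : ℤ) - 2 * (e : ℤ))) ∧
        ∃ u : F, u ∈ O ∧ u ≠ 0 ∧ ord u = 0 ∧
          EquivO O ord G !![1, 0; 0, u * π ^ (2 * f - 2 * e)])) ∧
    (∀ g : ℕ, d = 2 * g → 0 < g → g ≤ e →
      (f < e - g →
        (∀ i : ℤ, HasJordanComponent O ord π G i ↔
          i = (f : ℤ) + (g : ℤ) - (e : ℤ)) ∧
        IsModularMat O ord π G ((f : ℤ) + (g : ℤ) - (e : ℤ)) ∧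
        Indecomposable2 O ord G) ∧
      (e - g ≤ f →
        (∀ i : ℤ, HasJordanComponent O ord π G i ↔
          (i = 0 ∨ i = 2 * (f : ℤ) + 2 * (g : ℤ) - 2 * (e : ℤ))) ∧
        ∃ u : F, u ∈ O ∧ u ≠ 0 ∧ ord u = 0 ∧
          EquivO O ord G !![1, 0; 0, u * π ^ (2 * f + 2 * g - 2 * e)])) ∧
    (d = 2 * e + 1 →
      (∀ i : ℤ, HasJordanComponent O ord π G i ↔ (i = 0 ∨ i = 2 * (f : ℤ) + 1)) ∧
      ∃ u : F, u ∈ O ∧ u ≠ 0 ∧ ord u = 0 ∧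
        EquivO O ord G !![1, 0; 0, u * π ^ (2 * f + 1)]) := by
  set T := Algebra.trace F E ω
  set S := Algebra.norm F ω
  have hπO : π ∈ O := hF.mem_of_ord_nonneg (by rw [hπ.2]; norm_num)
  have ht : π ^ f * T ∈ O := O.mul_mem (pow_mem hπO f) hE.trace_mem
  have hn : π ^ (2 * f) * S ∈ O := O.mul_mem (pow_mem hπO _) hE.norm_mem
  have hdisc : (π ^ f * T) ^ 2 - 4 * (π ^ (2 * f) * S) = π ^ (2 * f) * (T ^ 2 - 4 * S) := by
    ring
  have hΔ := hdisc ▸ mul_ne_zero (pow_ne_zero _ hπ.1) hE.disc_ne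
  have hD : ord ((π ^ f * T) ^ 2 - 4 * (π ^ (2 * f) * S)) - 2 * ord (2 : F) =
      2 * f + d - 2 * e := by
    rw [hdisc, hF.ord_mul _ _ (pow_ne_zero _ hπ.1) hE.disc_ne, hF.ord_pow hπ.1, hπ.2,
      hE.disc_ord, he]
    push_cast
    ring
  subst hG
  rw [normGram_eq_binaryGram]
  have modular := fun (j : ℤ) (hj : 2 * j = 2 * f + d - 2 * e) (hj0 : j < 0) =>
    binaryGram_jordan_of_neg hF hπ ht hn hΔ (hj.trans hD.symm) hj0
  have split := fun (l : ℤ) (k : ℕ) (hl : 2 * f + d - 2 * e = l) (hk : (k : ℤ) = l) =>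
    binaryGram_jordan_of_nonneg hF hπ ht hn hΔ (hD.trans hl) k hk
  refine ⟨fun hd => ⟨fun hf => modular _ (by omega) (by omega),
      fun hf => split _ (2 * f - 2 * e) (by omega) (by omega)⟩,
    fun g hg _ _ => ⟨fun hf => modular _ (by omega) (by omega),
      fun hf => split _ (2 * f + 2 * g - 2 * e) (by omega) (by omega)⟩,
    fun hd => split _ (2 * f + 1) (by omega) (by omega)⟩

end GK
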